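/- Let T^{ab} = T^{(ab)}(x^i, g_{cd,I} : |I| ≤ k) be a k-th order source form with k ≥ 1 which is divergence-free. Then the top-order derivatives of T satisfy ∂^{cd,(i₁⋯i_k} T^{b)a} = 0 for all a, c, d, i₁,…,i_k, b, i.e., the symmetrization over the k+1 indices b, i₁, …, i_k of ∂^{cd,i₁⋯i_k} T^{ab} vanishes identically. -/

import Mathlib

open scoped BigOperators

namespace JetMetric

/-- Unordered multi-indices: multisets of coordinate indices. -/
abbrev MIdx (m : ℕ) := Multiset (Fin m)

/-- The (infinite) jet space of metrics on ℝ^m: base coordinates `x^i` together with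
all derivative coordinates `g_{ab,I}`. -/
abbrev Jet (m : ℕ) := (Fin m → ℝ) × (Fin m → Fin m → MIdx m → ℝ)

/-- The zeroth order coordinates `g_{ab}` as a matrix. -/
noncomputable def gMat {m : ℕ} (z : Jet m) : Matrix (Fin m) (Fin m) ℝ :=
  Matrix.of fun a b => z.2 a b 0

/-- The domain of interest: symmetric jets with nondegenerate metric. -/
def JetDom (m : ℕ) : Set (Jet m) :=
  {z | (∀ a b I, z.2 a b I = z.2 b a I) ∧ (gMat z).det ≠ 0}

/-- The symmetrized pair delta `δ^a_{(c} δ^b_{d)}`. -/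
noncomputable def pairWt {m : ℕ} (a b c d : Fin m) : ℝ :=
  ((if a = c ∧ b = d then (1 : ℝ) else 0) + (if a = d ∧ b = c then (1 : ℝ) else 0)) / 2

/-- The symmetrized multi-index delta `δ^{(i₁}_{j₁} ⋯ δ^{i_k)}_{j_k}` for unordered
multi-indices `I`, `J`. -/
noncomputable def idxWt {m : ℕ} (I J : MIdx m) : ℝ :=
  if I = J then
    (∏ s ∈ I.toFinset, (Nat.factorial (I.count s) : ℝ)) /
      (Nat.factorial (Multiset.card I) : ℝ)
  else 0

/-- The weighted partial derivative operator `∂^{ab,I}`, realized as the directional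
derivative along the symmetrized coordinate direction determined by
`∂^{ab,I} g_{cd,J} = δ^a_{(c} δ^b_{d)} δ^{(i₁}_{j₁} ⋯ δ^{i_k)}_{j_k}`. -/
noncomputable def pd {m : ℕ} (a b : Fin m) (I : MIdx m) (F : Jet m → ℝ) : Jet m → ℝ :=
  fun z => deriv (fun t : ℝ =>
    F (z.1, fun c d J => z.2 c d J + t * (pairWt a b c d * idxWt I J))) 0

/-- The partial derivative `∂/∂x^i` in a base coordinate. -/
noncomputable def xpd {m : ℕ} (i : Fin m) (F : Jet m → ℝ) : Jet m → ℝ :=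
  fun z => deriv (fun t : ℝ => F (Function.update z.1 i (z.1 i + t), z.2)) 0

/-- The partial derivative `∂/∂x^i` of a function on the base `ℝ^m`. -/
noncomputable def vpd {m : ℕ} (i : Fin m) (f : (Fin m → ℝ) → ℝ) : (Fin m → ℝ) → ℝ :=
  fun x => deriv (fun t : ℝ => f (Function.update x i (x i + t))) 0

/-- The total derivative operator
`D_i = ∂/∂x^i + Σ_{|I| ≥ 0} g_{ab,Ii} ∂^{ab,I}`, the Einstein sum running over all
ordered multi-indices `I` (lists) and all `a`, `b`. -/
noncomputable def Dt {m : ℕ} (i : Fin m) (F : Jet m → ℝ) : Jet m → ℝ :=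
  fun z => xpd i F z +
    ∑' l : List (Fin m), ∑ a : Fin m, ∑ b : Fin m,
      z.2 a b ((l : MIdx m) + {i}) * pd a b (l : MIdx m) F z

/-- The iterated total derivative `D_I = D_{i₁} ⋯ D_{i_k}` along an ordered multi-index. -/
noncomputable def DtL {m : ℕ} (l : List (Fin m)) (F : Jet m → ℝ) : Jet m → ℝ :=
  l.foldr Dt F

/-- The higher Euler–Lagrange operators
`E^{ab,I}(F) = Σ_{|J| ≥ 0} binom(|I|+|J|,|I|) (−D)_J (∂^{ab,IJ} F)`, the sum running over
all ordered multi-indices `J`. -/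
noncomputable def hEL {m : ℕ} (a b : Fin m) (I : MIdx m) (F : Jet m → ℝ) : Jet m → ℝ :=
  fun z => ∑' J : List (Fin m),
    (Nat.choose (Multiset.card I + J.length) (Multiset.card I) : ℝ) * (-1 : ℝ) ^ J.length *
      DtL J (pd a b (I + (J : MIdx m)) F) z

/-- The Euler–Lagrange operator `E^{ab}(L) = Σ_{|I| ≥ 0} (−D)_I (∂^{ab,I} L)`. -/
noncomputable def EL {m : ℕ} (a b : Fin m) (F : Jet m → ℝ) : Jet m → ℝ := hEL a b 0 F

/-- The Helmholtz components `H^{ab;cd,I} = ∂^{cd,I} T^{ab} − (−1)^{|I|} E^{ab,I}(T^{cd})`. -/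
noncomputable def Helm {m : ℕ} (T : Fin m → Fin m → Jet m → ℝ) (a b c d : Fin m)
    (I : MIdx m) : Jet m → ℝ :=
  fun z => pd c d I (T a b) z - (-1 : ℝ) ^ (Multiset.card I) * hEL a b I (T c d) z

/-- Truncated jet coordinates of order ≤ k (derivative slots labelled by ordered tuples). -/
abbrev Trunc (m k : ℕ) :=
  (Fin m → ℝ) × (Fin m → Fin m → (j : Fin (k + 1)) → ((Fin (j : ℕ) → Fin m) → ℝ))

/-- Projection from the jet space onto the truncated coordinates. -/
noncomputable def truncProj (m k : ℕ) (z : Jet m) : Trunc m k :=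
  (z.1, fun a b _j p => z.2 a b ((List.ofFn p : List (Fin m)) : MIdx m))

/-- The nondegeneracy domain in the truncated coordinates. -/
def truncDom (m k : ℕ) : Set (Trunc m k) :=
  {w | (Matrix.of fun a b => w.2 a b ⟨0, Nat.succ_pos k⟩ (fun i => i.elim0)).det ≠ 0}

/-- `F` is a differential function of order `k`: on the domain where `det g ≠ 0` it is a
smooth function of the variables `x^i` and `g_{ab,I}` with `|I| ≤ k` only. -/
def IsDF (m k : ℕ) (F : Jet m → ℝ) : Prop :=
  ∃ f : Trunc m k → ℝ, ContDiffOn ℝ (⊤ : ℕ∞) f (truncDom m k) ∧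
    ∀ z, F z = f (truncProj m k z)

/-- A source form of order `k`: symmetric components `T^{ab} = T^{(ab)}`, each a
differential function of order `k`. -/
structure SourceForm (m k : ℕ) where
  T : Fin m → Fin m → Jet m → ℝ
  symm : ∀ a b, T a b = T b a
  order : ∀ a b, IsDF m k (T a b)

/-- The inverse metric `g^{ab}`. -/
noncomputable def ginv {m : ℕ} (z : Jet m) : Matrix (Fin m) (Fin m) ℝ := (gMat z)⁻¹

/-- The Christoffel symbols `Γ^a_{bc} = ½ g^{ad}(g_{db,c} + g_{dc,b} − g_{bc,d})`. -/
noncomputable def Gamma {m : ℕ} (a b c : Fin m) (z : Jet m) : ℝ :=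
  (1 / 2) * ∑ d, ginv z a d * (z.2 d b {c} + z.2 d c {b} - z.2 b c {d})

/-- `T` is divergence-free: `D_b T^{ab} + Γ^a_{bc} T^{bc} = 0` identically. -/
def DivFree {m k : ℕ} (S : SourceForm m k) : Prop :=
  ∀ a, ∀ z ∈ JetDom m,
    (∑ b, Dt b (S.T a b) z) + (∑ b, ∑ c, Gamma a b c z * S.T b c z) = 0

/-- Evolutionary components `X_{ev,ab} = Q_{ab} − P^c g_{ab,c}` of a projectable
vector field `X = P^i ∂/∂x^i + Q_{ab} ∂^{ab}`. -/
noncomputable def Xev {m : ℕ} (P : Fin m → (Fin m → ℝ) → ℝ) (Q : Fin m → Fin m → Jet m → ℝ)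
    (a b : Fin m) : Jet m → ℝ :=
  fun z => Q a b z - ∑ c, P c z.1 * z.2 a b {c}

/-- The prolongation `pr X = P^i D_i + Σ_{|I| ≥ 0} D_I(X_{ev,ab}) ∂^{ab,I}` of a
projectable vector field, acting on differential functions. -/
noncomputable def prX {m : ℕ} (P : Fin m → (Fin m → ℝ) → ℝ) (Q : Fin m → Fin m → Jet m → ℝ)
    (F : Jet m → ℝ) : Jet m → ℝ :=
  fun z => (∑ i, P i z.1 * Dt i F z) +
    ∑' l : List (Fin m), ∑ a, ∑ b, DtL l (Xev P Q a b) z * pd a b (l : MIdx m) F z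

/-- The components of the Lie derivative of a source form along the prolongation of a
projectable vector field:
`(ℒ_X T)^{ab} = pr X(T^{ab}) + T^{cd} ∂^{ab,∅} Q_{cd} + (∂P^j/∂x^j) T^{ab}`. -/
noncomputable def LieT {m : ℕ} (P : Fin m → (Fin m → ℝ) → ℝ) (Q : Fin m → Fin m → Jet m → ℝ)
    (T : Fin m → Fin m → Jet m → ℝ) (a b : Fin m) : Jet m → ℝ :=
  fun z => prX P Q (T a b) z + (∑ c, ∑ d, T c d z * pd a b 0 (Q c d) z)
    + (∑ j, vpd j (P j) z.1) * T a b z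

/-- The `∂^{ab}`-components `Q_{ab} = −2 ξ^c_{,(a} g_{b)c}` of the lift `X_ξ` of a vector
field `ξ` on `ℝ^m` to the bundle of metrics. -/
noncomputable def liftQ {m : ℕ} (ξ : Fin m → (Fin m → ℝ) → ℝ) (a b : Fin m) : Jet m → ℝ :=
  fun z => -∑ c, (vpd a (ξ c) z.1 * z.2 b c 0 + vpd b (ξ c) z.1 * z.2 a c 0)

/-- `T` is natural: `pr X_ξ(T^{ab}) − 2 ξ^{(a}_{,c} T^{b)c} + ξ^c_{,c} T^{ab} = 0`
identically, for every smooth vector field `ξ` on `ℝ^m`. -/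
def Natural {m k : ℕ} (S : SourceForm m k) : Prop :=
  ∀ ξ : Fin m → (Fin m → ℝ) → ℝ, (∀ c, ContDiff ℝ (⊤ : ℕ∞) (ξ c)) →
    ∀ a b, ∀ z ∈ JetDom m,
      prX ξ (liftQ ξ) (S.T a b) z
        - ((∑ c, vpd c (ξ a) z.1 * S.T b c z) + (∑ c, vpd c (ξ b) z.1 * S.T a c z))
        + (∑ c, vpd c (ξ c) z.1) * S.T a b z = 0

/-- `T` admits translational conservation laws: `E^{hk}(g_{ab,p} T^{ab}) = 0` identically. -/
def TranslCL {m k : ℕ} (S : SourceForm m k) : Prop :=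
  ∀ p h k', ∀ z ∈ JetDom m,
    EL h k' (fun w => ∑ a, ∑ b, w.2 a b {p} * S.T a b w) z = 0

/-- `T` is locally variational: all Helmholtz components vanish identically. -/
def LocallyVariational {m k : ℕ} (S : SourceForm m k) : Prop :=
  ∀ a b c d (I : MIdx m), ∀ z ∈ JetDom m, Helm S.T a b c d I z = 0

/-- `F` has no explicit dependence on the base coordinates `x^i`. -/
def NoExplicitX {m : ℕ} (F : Jet m → ℝ) : Prop :=
  ∀ x x' g, F (x, g) = F (x', g)

/-! The divergence identity is evaluated along the line `t ↦ z + t ∂^{cd,J}` with `|J| = k + 1`.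
Since `T`, its partial derivatives and the Christoffel symbols only see coordinates of order
`≤ k`, the only `t`-dependence comes from the coefficients `g_{ef,Lb}` of the total derivative
`D_b`, so the identity is affine in `t`. Its slope is a positive multiple of the sum of
`∂^{cd,L} T^{ab}` over the ways of writing `J = L + {b}`, which is the symmetrization in the
statement up to a positive factor. -/

open Finset

variable {m k : ℕ}

def SameJet (k : ℕ) (z w : Jet m) : Prop :=
  z.1 = w.1 ∧ ∀ a b (I : MIdx m), Multiset.card I ≤ k → z.2 a b I = w.2 a b I

theorem truncProj_eq_of_sameJet {z w : Jet m} (h : SameJet k z w) :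
    truncProj m k z = truncProj m k w :=
  Prod.ext h.1 <| funext fun a => funext fun b => funext fun j => funext fun _ =>
    h.2 a b _ (by simpa using j.is_le)

theorem IsDF.eq_of_sameJet {F : Jet m → ℝ} (hF : IsDF m k F) {z w : Jet m}
    (h : SameJet k z w) : F z = F w := by
  obtain ⟨f, -, hf⟩ := hF
  rw [hf, hf, truncProj_eq_of_sameJet h]

theorem gMat_eq_of_sameJet {z w : Jet m} (h : SameJet k z w) : gMat z = gMat w :=
  Matrix.ext fun a b => h.2 a b 0 (by simp)

theorem Gamma_eq_of_sameJet (hk : 1 ≤ k) {z w : Jet m} (h : SameJet k z w) (a b c : Fin m) :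
    Gamma a b c z = Gamma a b c w := by
  have h₁ : ∀ e f p, z.2 e f {p} = w.2 e f {p} := fun e f p => h.2 e f {p} (by simpa using hk)
  simp only [Gamma, ginv, gMat_eq_of_sameJet h, h₁]

theorem pairWt_comm (a b c d : Fin m) : pairWt a b c d = pairWt b a c d := by
  unfold pairWt
  split_ifs <;> first | (exfalso; tauto) | ring

theorem pairWt_comm' (a b c d : Fin m) : pairWt a b c d = pairWt a b d c := by
  unfold pairWt
  ring

theorem sum_pairWt_mul (c d : Fin m) (P : Fin m → Fin m → ℝ) (hP : ∀ e f, P e f = P f e) :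
    ∑ e, ∑ f, pairWt c d e f * P e f = P c d := by
  have h : ∀ e f, pairWt c d e f * P e f
      = ((if d = f then (if c = e then P e f else 0) else 0)
        + (if c = f then (if d = e then P e f else 0) else 0)) / 2 := by
    intro e f
    unfold pairWt
    split_ifs <;> first | (exfalso; tauto) | ring
  simp only [h, ← sum_div, sum_add_distrib, sum_ite_eq, mem_univ, if_true, hP d c]
  ring

theorem idxWt_eq_zero_of_card_ne {I K : MIdx m} (h : Multiset.card I ≠ Multiset.card K) :
    idxWt I K = 0 :=
  if_neg fun hIK => h (congrArg _ hIK)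

theorem idxWt_self_ne_zero (I : MIdx m) : idxWt I I ≠ 0 := by
  rw [idxWt, if_pos rfl]
  positivity

theorem idxWt_eq_ite (I K : MIdx m) : idxWt I K = if K = I then idxWt I I else 0 := by
  by_cases h : K = I
  · rw [if_pos h, h]
  · rw [if_neg h, idxWt, if_neg (Ne.symm h)]

noncomputable def shiftJet (c d : Fin m) (J : MIdx m) (t : ℝ) (z : Jet m) : Jet m :=
  (z.1, fun e f K => z.2 e f K + t * (pairWt c d e f * idxWt J K))

theorem pd_eq_deriv_shiftJet (c d : Fin m) (J : MIdx m) (F : Jet m → ℝ) (z : Jet m) :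
    pd c d J F z = deriv (fun t => F (shiftJet c d J t z)) 0 :=
  rfl

theorem sameJet_shiftJet {J : MIdx m} (hJ : k < Multiset.card J) (c d : Fin m) (t : ℝ)
    (z : Jet m) : SameJet k (shiftJet c d J t z) z :=
  ⟨rfl, fun e f K hK => by
    simp [shiftJet, idxWt_eq_zero_of_card_ne (show Multiset.card J ≠ Multiset.card K by omega)]⟩

theorem SameJet.shiftJet {z w : Jet m} (h : SameJet k z w) (c d : Fin m) (J : MIdx m) (t : ℝ) :
    SameJet k (shiftJet c d J t z) (shiftJet c d J t w) :=
  ⟨h.1, fun e f K hK => by simp only [JetMetric.shiftJet, h.2 e f K hK]⟩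

theorem shiftJet_mem_jetDom {z : Jet m} (hz : z ∈ JetDom m) {J : MIdx m}
    (hJ : 0 < Multiset.card J) (c d : Fin m) (t : ℝ) : shiftJet c d J t z ∈ JetDom m := by
  refine ⟨fun e f K => ?_, ?_⟩
  · simp only [shiftJet, hz.1 e f K, pairWt_comm' c d e f]
  · rw [gMat_eq_of_sameJet (sameJet_shiftJet hJ c d t z)]
    exact hz.2

theorem pd_comm (e f : Fin m) (I : MIdx m) (F : Jet m → ℝ) (z : Jet m) :
    pd e f I F z = pd f e I F z := by
  simp only [pd, pairWt_comm e f]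

theorem IsDF.pd_eq_of_sameJet {F : Jet m → ℝ} (hF : IsDF m k F) {z w : Jet m}
    (h : SameJet k z w) (c d : Fin m) (I : MIdx m) : pd c d I F z = pd c d I F w := by
  simp only [pd_eq_deriv_shiftJet, hF.eq_of_sameJet (h.shiftJet c d I _)]

theorem IsDF.pd_eq_zero_of_lt_card {F : Jet m → ℝ} (hF : IsDF m k F) {I : MIdx m}
    (hI : k < Multiset.card I) (c d : Fin m) (z : Jet m) : pd c d I F z = 0 := by
  simp only [pd_eq_deriv_shiftJet, hF.eq_of_sameJet (sameJet_shiftJet hI c d _ z), deriv_const]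

theorem IsDF.xpd_eq_of_sameJet {F : Jet m → ℝ} (hF : IsDF m k F) {z w : Jet m}
    (h : SameJet k z w) (i : Fin m) : xpd i F z = xpd i F w := by
  simp only [xpd, h.1]
  congr 1
  funext t
  exact hF.eq_of_sameJet ⟨rfl, h.2⟩

def listsLe (m k : ℕ) : Finset (List (Fin m)) :=
  (range (k + 1)).biUnion fun n => univ.image fun p : Fin n → Fin m => List.ofFn p

theorem exists_ofFn_eq {α : Type*} {n : ℕ} {l : List α} (h : l.length = n) :
    ∃ p : Fin n → α, List.ofFn p = l := by
  subst h
  exact ⟨l.get, List.ofFn_get l⟩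

theorem mem_listsLe {l : List (Fin m)} : l ∈ listsLe m k ↔ l.length ≤ k := by
  simp only [listsLe, mem_biUnion, mem_range, mem_image, mem_univ, true_and]
  constructor
  · rintro ⟨n, hn, p, rfl⟩
    simpa using Nat.lt_succ_iff.mp hn
  · intro h
    exact ⟨l.length, Nat.lt_succ_of_le h, exists_ofFn_eq rfl⟩

theorem sum_listsLe_eq_sum_ofFn {M : Type*} [AddCommMonoid M] (f : List (Fin m) → M)
    (hf : ∀ l, l.length < k → f l = 0) :
    ∑ l ∈ listsLe m k, f l = ∑ p : Fin k → Fin m, f (List.ofFn p) := by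
  rw [← sum_image fun p _ q _ h => List.ofFn_injective h]
  refine (sum_subset (fun l hl => ?_) fun l hl hl' => hf l ?_).symm
  · obtain ⟨p, -, rfl⟩ := mem_image.mp hl
    exact mem_listsLe.mpr (by simp)
  · refine lt_of_le_of_ne (mem_listsLe.mp hl) fun hlen => hl' ?_
    obtain ⟨p, rfl⟩ := exists_ofFn_eq hlen
    exact mem_image_of_mem _ (mem_univ p)

theorem IsDF.Dt_eq_sum {F : Jet m → ℝ} (hF : IsDF m k F) (i : Fin m) (z : Jet m) :
    Dt i F z = xpd i F z +
      ∑ l ∈ listsLe m k, ∑ e, ∑ f,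
        z.2 e f ((l : MIdx m) + {i}) * pd e f (l : MIdx m) F z := by
  refine congrArg _ (tsum_eq_sum fun l hl => ?_)
  have hlen : k < Multiset.card (l : MIdx m) := by
    simpa using lt_of_not_ge fun h => hl (mem_listsLe.mpr h)
  simp [hF.pd_eq_zero_of_lt_card hlen]

theorem IsDF.Dt_shiftJet {F : Jet m → ℝ} (hF : IsDF m k F) {J : MIdx m}
    (hJ : Multiset.card J = k + 1) (i c d : Fin m) (t : ℝ) (z : Jet m) :
    Dt i F (shiftJet c d J t z) = Dt i F z +
      t * ∑ l ∈ listsLe m k, idxWt J ((l : MIdx m) + {i}) * pd c d (l : MIdx m) F z := by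
  have hs := sameJet_shiftJet (show k < Multiset.card J by omega) c d t z
  rw [hF.Dt_eq_sum, hF.Dt_eq_sum, hF.xpd_eq_of_sameJet hs, add_assoc, mul_sum,
    ← sum_add_distrib]
  refine congrArg _ (sum_congr rfl fun l _ => ?_)
  rw [← sum_pairWt_mul c d (fun e f => t * (idxWt J ((l : MIdx m) + {i}) * pd e f l F z))
    fun e f => by rw [pd_comm], ← sum_add_distrib]
  refine sum_congr rfl fun e _ => ?_
  rw [← sum_add_distrib]
  refine sum_congr rfl fun f _ => ?_
  rw [hF.pd_eq_of_sameJet hs, shiftJet]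
  ring

theorem DivFree.sum_idxWt_mul_pd_eq_zero {S : SourceForm m k} (hdiv : DivFree S) (hk : 1 ≤ k)
    {J : MIdx m} (hJ : Multiset.card J = k + 1) (a c d : Fin m) {z : Jet m}
    (hz : z ∈ JetDom m) :
    ∑ b, ∑ l ∈ listsLe m k, idxWt J ((l : MIdx m) + {b}) * pd c d (l : MIdx m) (S.T a b) z
      = 0 := by
  have hs := sameJet_shiftJet (show k < Multiset.card J by omega) c d 1 z
  have h₁ := hdiv a _ (shiftJet_mem_jetDom hz (show 0 < Multiset.card J by omega) c d 1)
  simp only [(S.order _ _).Dt_shiftJet hJ, Gamma_eq_of_sameJet hk hs,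
    (S.order _ _).eq_of_sameJet hs, one_mul, sum_add_distrib] at h₁
  linarith [hdiv a z hz]

theorem exists_comp_perm_eq_of_perm_ofFn {n : ℕ} {α : Type*} [LinearOrder α]
    {v q : Fin n → α} (h : (List.ofFn v).Perm (List.ofFn q)) :
    ∃ σ : Equiv.Perm (Fin n), v ∘ σ = q := by
  have hsort : v ∘ Tuple.sort v = q ∘ Tuple.sort q :=
    List.ofFn_injective <| List.Perm.eq_of_sortedLE
      (Tuple.monotone_sort v).sortedLE_ofFn (Tuple.monotone_sort q).sortedLE_ofFn
      ((((Tuple.sort v).ofFn_comp_perm v).trans h).trans ((Tuple.sort q).ofFn_comp_perm q).symm)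
  refine ⟨Tuple.sort v * (Tuple.sort q)⁻¹, funext fun x => ?_⟩
  simpa using congrFun hsort ((Tuple.sort q)⁻¹ x)

theorem card_filter_comp_perm_eq {n : ℕ} {α : Type*} [DecidableEq α] {v q : Fin n → α}
    {σ₀ : Equiv.Perm (Fin n)} (h : v ∘ σ₀ = q) :
    #{σ : Equiv.Perm (Fin n) | v ∘ σ = q} = #{σ : Equiv.Perm (Fin n) | v ∘ σ = v} := by
  subst h
  refine card_bij' (fun σ _ => σ * σ₀⁻¹) (fun τ _ => τ * σ₀) ?_ ?_ ?_ ?_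
  · intro σ hσ
    simp only [mem_filter, mem_univ, true_and] at hσ ⊢
    funext x
    simpa using congrFun hσ (σ₀⁻¹ x)
  · intro τ hτ
    simp only [mem_filter, mem_univ, true_and] at hτ ⊢
    funext x
    simpa using congrFun hτ (σ₀ x)
  · intro σ _; simp [mul_assoc]
  · intro τ _; simp [mul_assoc]

/-- Orbit–stabilizer for sums over the rearrangements of a tuple. -/
theorem sum_perm_comp_eq_card_smul_sum {n : ℕ} {α M : Type*} [LinearOrder α] [Fintype α]
    [AddCommMonoid M] (v : Fin n → α) (H : (Fin n → α) → M) :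
    ∑ σ : Equiv.Perm (Fin n), H (v ∘ σ) = #{σ : Equiv.Perm (Fin n) | v ∘ σ = v} •
      ∑ q : Fin n → α with (List.ofFn q : Multiset α) = List.ofFn v, H q := by
  have himage : univ.image (fun σ : Equiv.Perm (Fin n) => v ∘ σ)
      = univ.filter fun q : Fin n → α => (List.ofFn q : Multiset α) = List.ofFn v := by
    ext q
    rw [mem_image, mem_filter, Multiset.coe_eq_coe]
    exact ⟨fun ⟨σ, _, hσ⟩ => ⟨mem_univ q, hσ ▸ σ.ofFn_comp_perm v⟩,
      fun ⟨_, hq⟩ =>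
        (exists_comp_perm_eq_of_perm_ofFn hq.symm).imp fun _ h => ⟨mem_univ _, h⟩⟩
  rw [sum_comp, himage, smul_sum]
  refine sum_congr rfl fun q hq => ?_
  obtain ⟨σ₀, hσ₀⟩ :=
    exists_comp_perm_eq_of_perm_ofFn (Multiset.coe_eq_coe.mp (mem_filter.mp hq).2).symm
  rw [card_filter_comp_perm_eq hσ₀]

theorem sum_listsLe_idxWt_mul {J : MIdx m} (hJ : Multiset.card J = k + 1)
    (G : Fin m → MIdx m → ℝ) :
    ∑ b, ∑ l ∈ listsLe m k, idxWt J ((l : MIdx m) + {b}) * G b l = idxWt J J *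
      ∑ q : Fin (k + 1) → Fin m with (List.ofFn q : MIdx m) = J,
        G (q 0) (List.ofFn fun i => q i.succ) := by
  have hcard : ∀ (l : List (Fin m)) b, l.length < k → idxWt J ((l : MIdx m) + {b}) = 0 :=
    fun l b hl => idxWt_eq_zero_of_card_ne (by
      simp only [Multiset.card_add, Multiset.coe_card, Multiset.card_singleton]
      omega)
  have hofFn : ∀ q : Fin (k + 1) → Fin m,
      (List.ofFn q : MIdx m) = (List.ofFn fun i => q i.succ : MIdx m) + {q 0} := fun q => by
    rw [List.ofFn_succ, ← Multiset.cons_coe, ← Multiset.singleton_add]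
    exact add_comm _ _
  calc ∑ b, ∑ l ∈ listsLe m k, idxWt J ((l : MIdx m) + {b}) * G b l
      = ∑ bp : Fin m × (Fin k → Fin m),
          idxWt J ((List.ofFn bp.2 : MIdx m) + {bp.1}) * G bp.1 (List.ofFn bp.2) := by
        rw [Fintype.sum_prod_type]
        exact sum_congr rfl fun b _ =>
          sum_listsLe_eq_sum_ofFn _ fun l hl => by rw [hcard l b hl, zero_mul]
    _ = ∑ q : Fin (k + 1) → Fin m,
          idxWt J (List.ofFn q) * G (q 0) (List.ofFn fun i => q i.succ) :=
        Fintype.sum_equiv (Fin.consEquiv fun _ => Fin m) _ _ fun bp => by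
          simp only [Fin.consEquiv, Equiv.coe_fn_mk, hofFn, Fin.cons_zero, Fin.cons_succ]
    _ = _ := by
        rw [mul_sum, sum_filter]
        refine sum_congr rfl fun q _ => ?_
        rw [idxWt_eq_ite J (List.ofFn q), ite_mul, zero_mul]

/-- Here `v 0` plays the role of `b` and `v 1, …, v k` the roles of `i₁, …, i_k`. -/
theorem stmt10 {m k : ℕ} (hk : 1 ≤ k) (S : SourceForm m k) (hdiv : DivFree S) :
    ∀ (a c d : Fin m) (v : Fin (k + 1) → Fin m), ∀ z ∈ JetDom m,
      (1 / (Nat.factorial (k + 1) : ℝ)) *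
        ∑ σ : Equiv.Perm (Fin (k + 1)),
          pd c d ((List.ofFn fun t : Fin k => v (σ t.succ)) : MIdx m)
            (S.T a (v (σ 0))) z = 0 := by
  intro a c d v z hz
  have hJ : Multiset.card (List.ofFn v : MIdx m) = k + 1 := by simp
  have hslope := hdiv.sum_idxWt_mul_pd_eq_zero hk hJ a c d hz
  rw [sum_listsLe_idxWt_mul hJ fun b L => pd c d L (S.T a b) z] at hslope
  have hsum := (mul_eq_zero.mp hslope).resolve_left (idxWt_self_ne_zero _)
  have hperm := sum_perm_comp_eq_card_smul_sum v
    fun q => pd c d (List.ofFn fun i => q i.succ : MIdx m) (S.T a (q 0)) z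
  simp only [Function.comp_apply] at hperm
  rw [hperm, hsum, smul_zero, mul_zero]

end JetMetric
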